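/- Let ℬ be a closed subarrangement of a central arrangement 𝒜. Then the induced surjection π_*: 𝔥(𝒜) → 𝔥(ℬ) between holonomy Lie algebras splits, its kernel is the Lie subalgebra of 𝔥(𝒜) generated by the classes of hyperplanes in 𝒜∖ℬ, and 𝔥(𝒜) is an almost-direct product of 𝔥(ℬ) and Ker π_*: that is, [Ker π_*, σ_*(𝔥(ℬ))] ⊆ [Ker π_*, Ker π_*]. -/

import Mathlib

open Module

noncomputable section

/-- The ambient type of subspaces of `ℂ^ℓ`; a central arrangement is a finite set of
codimension-1 subspaces. -/
abbrev HypSp (ℓ : ℕ) := Submodule ℂ (Fin ℓ → ℂ)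

/-- The rank (codimension) of a flat. -/
def flatRank {ℓ : ℕ} (W : HypSp ℓ) : ℕ := ℓ - finrank ℂ W

/-- `𝒜` is a central arrangement of hyperplanes in `ℂ^ℓ`. -/
def IsArrangement {ℓ : ℕ} (𝒜 : Finset (HypSp ℓ)) : Prop :=
  ∀ H ∈ 𝒜, finrank ℂ H + 1 = ℓ

/-- The free Lie algebra over `ℚ` on the hyperplanes of `𝒜`. -/
abbrev FreeLie {ℓ : ℕ} (𝒜 : Finset (HypSp ℓ)) := FreeLieAlgebra ℚ {H : HypSp ℓ // H ∈ 𝒜}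

/-- `L` is a rank-2 flat of `𝒜`: the intersection of two distinct hyperplanes of `𝒜`. -/
def IsRank2Flat {ℓ : ℕ} (𝒜 : Finset (HypSp ℓ)) (L : HypSp ℓ) : Prop :=
  ∃ H₁ ∈ 𝒜, ∃ H₂ ∈ 𝒜, H₁ ≠ H₂ ∧ L = H₁ ⊓ H₂

open scoped Classical in
/-- `ΣL`: the sum, in the free Lie algebra, of all hyperplanes of `𝒜` below the flat `L`
(i.e. containing `L`). -/
def sigmaL {ℓ : ℕ} (𝒜 : Finset (HypSp ℓ)) (L : HypSp ℓ) : FreeLie 𝒜 :=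
  ∑ H ∈ 𝒜.attach, if L ≤ (H : HypSp ℓ) then FreeLieAlgebra.of ℚ H else 0

/-- The holonomy ideal `I(𝒜)`, generated by the `[H, ΣL]` for rank-2 flats `L` and
hyperplanes `H ⪯ L`. -/
def holIdeal {ℓ : ℕ} (𝒜 : Finset (HypSp ℓ)) : LieIdeal ℚ (FreeLie 𝒜) :=
  LieSubmodule.lieSpan ℚ (FreeLie 𝒜)
    {z | ∃ L : HypSp ℓ, IsRank2Flat 𝒜 L ∧ ∃ H : {H : HypSp ℓ // H ∈ 𝒜},
      L ≤ (H : HypSp ℓ) ∧ z = ⁅FreeLieAlgebra.of ℚ H, sigmaL 𝒜 L⁆}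

/-- The holonomy Lie algebra `𝔥(𝒜) = 𝕃(𝒜)/I(𝒜)`. -/
abbrev Holonomy {ℓ : ℕ} (𝒜 : Finset (HypSp ℓ)) := FreeLie 𝒜 ⧸ holIdeal 𝒜

/-- `ℬ` is a closed subarrangement of `𝒜`. -/
def IsClosedSub {ℓ : ℕ} (ℬ 𝒜 : Finset (HypSp ℓ)) : Prop :=
  ℬ ⊆ 𝒜 ∧ ∀ α ∈ ℬ, ∀ β ∈ ℬ, α ≠ β → ∀ c ∈ 𝒜, c ∉ ℬ → flatRank (α ⊓ β ⊓ c) = 3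

open scoped Classical in
/-- The projection `π : 𝕃(𝒜) → 𝕃(ℬ)` sending hyperplanes outside `ℬ` to `0`. -/
def arrPi {ℓ : ℕ} (ℬ 𝒜 : Finset (HypSp ℓ)) : FreeLie 𝒜 →ₗ⁅ℚ⁆ FreeLie ℬ :=
  FreeLieAlgebra.lift ℚ (fun H => if h : (H : HypSp ℓ) ∈ ℬ then
    FreeLieAlgebra.of ℚ (⟨(H : HypSp ℓ), h⟩ : {H : HypSp ℓ // H ∈ ℬ}) else 0)

/-- The inclusion `σ : 𝕃(ℬ) → 𝕃(𝒜)`. -/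
def arrSigma {ℓ : ℕ} (ℬ 𝒜 : Finset (HypSp ℓ)) (hsub : ℬ ⊆ 𝒜) : FreeLie ℬ →ₗ⁅ℚ⁆ FreeLie 𝒜 :=
  FreeLieAlgebra.lift ℚ (fun H => FreeLieAlgebra.of ℚ
    (⟨(H : HypSp ℓ), hsub H.2⟩ : {H : HypSp ℓ // H ∈ 𝒜}))


/-!
The projection `π` respects the holonomy relations of any subarrangement. Closedness of `ℬ` means
that no hyperplane of `𝒜 ∖ ℬ` contains a rank-2 flat of `ℬ`, so `σ` respects them as well; it
also means that the only hyperplane of `ℬ` containing a flat `H ⊓ c`, with `H ∈ ℬ` and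
`c ∈ 𝒜 ∖ ℬ`, is `H`. The relation `[c, Σ(H ⊓ c)] = 0` therefore reads `[c, H] = -∑ [c, K]` with
every `K` in `𝒜 ∖ ℬ`. Hence the Lie subalgebra `N` generated by the classes of `𝒜 ∖ ℬ` is
normalised by all generators, so it is an ideal; it is `ker π₊` because `x - σ₊ π₊ x ∈ N`, and
`[N, σ₊ 𝔥(ℬ)] ⊆ [N, N]` because it holds on generators and `[N, N]` is an ideal.
-/
section LinearAlgebra

variable {K V : Type*} [Field K] [AddCommGroup V] [Module K V] [FiniteDimensional K V]

theorem Submodule.finrank_inf_add_two_of_ne {α β : Submodule K V}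
    (hα : finrank K α + 1 = finrank K V) (hβ : finrank K β + 1 = finrank K V) (hne : α ≠ β) :
    finrank K ↥(α ⊓ β) + 2 = finrank K V := by
  have hβα : ¬ β ≤ α := fun h => hne (Submodule.eq_of_le_of_finrank_le h (by omega)).symm
  have hlt := Submodule.finrank_lt_finrank_of_lt (left_lt_sup.mpr hβα)
  have := Submodule.finrank_le (α ⊔ β)
  have := Submodule.finrank_sup_add_finrank_inf_eq α β
  omega

end LinearAlgebra

namespace LieIdeal

variable {R L L' : Type*} [CommRing R] [LieRing L] [LieAlgebra R L] [LieRing L'] [LieAlgebra R L']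

def mkLieHom (I : LieIdeal R L) : L →ₗ⁅R⁆ L ⧸ I :=
  { (LieSubmodule.Quotient.mk' I : L →ₗ[R] L ⧸ I) with
    map_lie' := LieSubmodule.Quotient.mk_bracket I _ _ }

@[simp]
theorem mkLieHom_apply (I : LieIdeal R L) (x : L) :
    mkLieHom I x = LieSubmodule.Quotient.mk' I x := rfl

def quotientMap (f : L →ₗ⁅R⁆ L') (I : LieIdeal R L) (J : LieIdeal R L') (h : I ≤ J.comap f) :
    L ⧸ I →ₗ⁅R⁆ L' ⧸ J :=
  { Submodule.mapQ I.toSubmodule J.toSubmodule f.toLinearMap fun _ hx => h hx with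
    map_lie' := by
      rintro ⟨x⟩ ⟨y⟩
      exact congrArg (LieSubmodule.Quotient.mk' J) (f.map_lie x y) }

theorem lie_mem_of_mem_lieSpan (I : LieIdeal R L) {S T : Set L}
    (h : ∀ s ∈ S, ∀ t ∈ T, ⁅s, t⁆ ∈ I) {x y : L} (hx : x ∈ LieSubalgebra.lieSpan R L S)
    (hy : y ∈ LieSubalgebra.lieSpan R L T) : ⁅x, y⁆ ∈ I := by
  induction hy using LieSubalgebra.lieSpan_induction generalizing x with
  | mem t ht =>
    induction hx using LieSubalgebra.lieSpan_induction with
    | mem s hs => exact h s hs t ht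
    | zero => simp
    | add _ _ _ _ h₁ h₂ => rw [add_lie]; exact add_mem h₁ h₂
    | smul a _ _ h₁ => rw [smul_lie]; exact I.smul_mem a h₁
    | lie x₁ x₂ _ _ h₁ h₂ =>
      rw [lie_lie]; exact sub_mem (I.lie_mem h₂) (I.lie_mem h₁)
  | zero => simp
  | add _ _ _ _ h₁ h₂ => rw [lie_add]; exact add_mem (h₁ hx) (h₂ hx)
  | smul a _ _ h₁ => rw [lie_smul]; exact I.smul_mem a (h₁ hx)
  | lie y₁ y₂ _ _ h₁ h₂ =>
    rw [leibniz_lie]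
    exact add_mem (lie_mem_left R L I _ _ (h₁ hx)) (I.lie_mem (h₂ hx))

end LieIdeal

namespace LieSubalgebra

variable {R L : Type*} [CommRing R] [LieRing L] [LieAlgebra R L]

theorem mem_normalizer_lieSpan {T : Set L} {s : L} (h : ∀ t ∈ T, ⁅t, s⁆ ∈ lieSpan R L T) :
    s ∈ (lieSpan R L T).normalizer := by
  rw [mem_normalizer_iff']
  intro y hy
  induction hy using lieSpan_induction with
  | mem t ht => exact h t ht
  | zero => simp
  | add _ _ _ _ h₁ h₂ => rw [add_lie]; exact add_mem h₁ h₂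
  | smul a _ _ h₁ => rw [smul_lie]; exact (lieSpan R L T).smul_mem a h₁
  | lie y₁ y₂ hy₁ hy₂ h₁ h₂ =>
    rw [lie_lie]
    exact sub_mem ((lieSpan R L T).lie_mem hy₁ h₂) ((lieSpan R L T).lie_mem hy₂ h₁)

theorem coe_lieIdeal_lieSpan_eq_lieSpan {S T : Set L} (hS : lieSpan R L S = ⊤)
    (h : ∀ s ∈ S, ∀ t ∈ T, ⁅t, s⁆ ∈ lieSpan R L T) :
    ((LieSubmodule.lieSpan R L T : LieIdeal R L) : Set L) = lieSpan R L T := by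
  have hnorm : (lieSpan R L T).normalizer = ⊤ :=
    eq_top_iff.mpr (hS ▸ lieSpan_le.mpr fun s hs => mem_normalizer_lieSpan (h s hs))
  obtain ⟨I, hI⟩ := (lieSpan R L T).exists_lieIdeal_coe_eq_iff.mpr fun x y hy =>
    ideal_in_normalizer (hnorm ▸ mem_top x) hy
  apply subset_antisymm
  · have : LieSubmodule.lieSpan R L T ≤ I := LieSubmodule.lieSpan_le.mpr fun t ht => by
      rw [← LieIdeal.coe_toLieSubalgebra, hI]; exact subset_lieSpan ht
    rw [← hI, LieIdeal.coe_toLieSubalgebra]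
    exact this
  · rw [← LieIdeal.coe_toLieSubalgebra]
    exact lieSpan_le.mpr LieSubmodule.subset_lieSpan

end LieSubalgebra

namespace FreeLieAlgebra

variable {R X L : Type*} [CommRing R] [LieRing L] [LieAlgebra R L]

theorem lieSpan_range_mk'_of (I : LieIdeal R (FreeLieAlgebra R X)) :
    LieSubalgebra.lieSpan R _ (Set.range fun x => LieSubmodule.Quotient.mk' I (of R x)) = ⊤ := by
  set A := LieSubalgebra.lieSpan R _ (Set.range fun x => LieSubmodule.Quotient.mk' I (of R x))
  let g : FreeLieAlgebra R X →ₗ⁅R⁆ A := lift R fun x => ⟨_, LieSubalgebra.subset_lieSpan ⟨x, rfl⟩⟩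
  have hg : A.incl.comp g = LieIdeal.mkLieHom I := hom_ext fun x => by simp [g]
  refine eq_top_iff.mpr fun y _ => ?_
  obtain ⟨z, rfl⟩ := LieSubmodule.Quotient.surjective_mk' I y
  exact LieHom.congr_fun hg z ▸ (g z).2

theorem quotient_hom_ext {I : LieIdeal R (FreeLieAlgebra R X)}
    {F₁ F₂ : FreeLieAlgebra R X ⧸ I →ₗ⁅R⁆ L}
    (h : ∀ x, F₁ (LieSubmodule.Quotient.mk' I (of R x)) =
      F₂ (LieSubmodule.Quotient.mk' I (of R x))) :
    F₁ = F₂ := by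
  have hcomp : F₁.comp (LieIdeal.mkLieHom I) = F₂.comp (LieIdeal.mkLieHom I) := hom_ext h
  ext y
  obtain ⟨z, rfl⟩ := LieSubmodule.Quotient.surjective_mk' I y
  exact LieHom.congr_fun hcomp z

theorem apply_mem_lieSpan_range {I : LieIdeal R (FreeLieAlgebra R X)}
    (f : FreeLieAlgebra R X ⧸ I →ₗ⁅R⁆ L) (q : FreeLieAlgebra R X ⧸ I) :
    f q ∈ LieSubalgebra.lieSpan R L
      (Set.range fun x => f (LieSubmodule.Quotient.mk' I (of R x))) := by
  rw [Set.range_comp' f, ← LieSubalgebra.map_lieSpan, lieSpan_range_mk'_of]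
  exact (LieSubalgebra.mem_map _ _ _).mpr ⟨q, LieSubalgebra.mem_top q, rfl⟩

end FreeLieAlgebra

open FreeLieAlgebra

section Arrangement

variable {ℓ : ℕ} {ℬ 𝒜 : Finset (HypSp ℓ)}

theorem IsArrangement.flatRank_inf (harr : IsArrangement 𝒜) {α β : HypSp ℓ} (hα : α ∈ 𝒜)
    (hβ : β ∈ 𝒜) (hne : α ≠ β) : flatRank (α ⊓ β) = 2 := by
  have h := Submodule.finrank_inf_add_two_of_ne (by rw [finrank_fin_fun]; exact harr α hα)
    (by rw [finrank_fin_fun]; exact harr β hβ) hne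
  rw [finrank_fin_fun] at h
  unfold flatRank
  omega

theorem IsRank2Flat.eq_inf (harr : IsArrangement 𝒜) {L : HypSp ℓ} (hL : IsRank2Flat 𝒜 L)
    {α β : HypSp ℓ} (hα : α ∈ 𝒜) (hβ : β ∈ 𝒜) (hne : α ≠ β) (hLα : L ≤ α) (hLβ : L ≤ β) :
    L = α ⊓ β := by
  obtain ⟨H₁, h₁, H₂, h₂, h₁₂, rfl⟩ := hL
  have hH₁₂ := harr.flatRank_inf h₁ h₂ h₁₂
  have hαβ := harr.flatRank_inf hα hβ hne
  unfold flatRank at hH₁₂ hαβ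
  exact Submodule.eq_of_le_of_finrank_le (le_inf hLα hLβ) (by omega)

theorem IsClosedSub.mem_of_inf_le (hclosed : IsClosedSub ℬ 𝒜) (harr : IsArrangement 𝒜)
    {α β c : HypSp ℓ} (hα : α ∈ ℬ) (hβ : β ∈ ℬ) (hne : α ≠ β) (hc : c ∈ 𝒜)
    (hle : α ⊓ β ≤ c) : c ∈ ℬ := by
  by_contra hcB
  have h := hclosed.2 α hα β hβ hne c hc hcB
  rw [inf_eq_left.mpr hle, harr.flatRank_inf (hclosed.1 hα) (hclosed.1 hβ) hne] at h
  omega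

theorem IsClosedSub.notMem_of_inf_le (hclosed : IsClosedSub ℬ 𝒜) (harr : IsArrangement 𝒜)
    {H c K : HypSp ℓ} (hH : H ∈ ℬ) (hc : c ∈ 𝒜) (hcB : c ∉ ℬ) (hKH : K ≠ H)
    (hle : H ⊓ c ≤ K) : K ∉ ℬ := by
  intro hK
  have h := hclosed.2 H hH K hK hKH.symm c hc hcB
  rw [inf_right_comm, inf_eq_left.mpr hle,
    harr.flatRank_inf (hclosed.1 hH) hc (ne_of_mem_of_not_mem hH hcB)] at h
  omega

end Arrangement

section FreeLie

open scoped Classical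

variable {ℓ : ℕ} {ℬ 𝒜 : Finset (HypSp ℓ)}

/-- Extended by `0` off `𝒜`, so that sums over the hyperplanes of `𝒜` and of `ℬ` through a flat
can be compared term by term. -/
def ofHyp (𝒜 : Finset (HypSp ℓ)) (K : HypSp ℓ) : FreeLie 𝒜 :=
  if h : K ∈ 𝒜 then of ℚ ⟨K, h⟩ else 0

theorem ofHyp_of_mem {K : HypSp ℓ} (hK : K ∈ 𝒜) : ofHyp 𝒜 K = of ℚ ⟨K, hK⟩ := dif_pos hK

theorem ofHyp_of_notMem {K : HypSp ℓ} (hK : K ∉ 𝒜) : ofHyp 𝒜 K = 0 := dif_neg hK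

theorem sigmaL_eq_sum_ofHyp (𝒜 : Finset (HypSp ℓ)) (L : HypSp ℓ) :
    sigmaL 𝒜 L = ∑ K ∈ 𝒜 with L ≤ K, ofHyp 𝒜 K := by
  rw [Finset.sum_filter, ← Finset.sum_attach 𝒜, sigmaL]
  refine Finset.sum_congr rfl fun K _ => ?_
  rw [ofHyp_of_mem K.2]

theorem sigmaL_eq_ofHyp_of_unique {L H : HypSp ℓ} (hH : H ∈ 𝒜) (hLH : L ≤ H)
    (huniq : ∀ K ∈ 𝒜, L ≤ K → K = H) : sigmaL 𝒜 L = ofHyp 𝒜 H := by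
  have hfilter : {K ∈ 𝒜 | L ≤ K} = {H} := by
    ext K
    simp only [Finset.mem_filter, Finset.mem_singleton]
    exact ⟨fun h => huniq K h.1 h.2, fun h => h ▸ ⟨hH, hLH⟩⟩
  rw [sigmaL_eq_sum_ofHyp, hfilter, Finset.sum_singleton]

theorem arrPi_of (H : {H : HypSp ℓ // H ∈ 𝒜}) : arrPi ℬ 𝒜 (of ℚ H) = ofHyp ℬ H :=
  lift_of_apply _ _

theorem arrSigma_of (hsub : ℬ ⊆ 𝒜) (H : {H : HypSp ℓ // H ∈ ℬ}) :
    arrSigma ℬ 𝒜 hsub (of ℚ H) = of ℚ ⟨H, hsub H.2⟩ :=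
  lift_of_apply _ _

theorem arrPi_comp_arrSigma (hsub : ℬ ⊆ 𝒜) :
    (arrPi ℬ 𝒜).comp (arrSigma ℬ 𝒜 hsub) = LieHom.id :=
  hom_ext fun H => by simp [arrSigma_of, arrPi_of, ofHyp_of_mem H.2]

theorem arrPi_sigmaL (hsub : ℬ ⊆ 𝒜) (L : HypSp ℓ) : arrPi ℬ 𝒜 (sigmaL 𝒜 L) = sigmaL ℬ L := by
  rw [sigmaL_eq_sum_ofHyp, sigmaL_eq_sum_ofHyp, map_sum]
  calc ∑ K ∈ 𝒜 with L ≤ K, arrPi ℬ 𝒜 (ofHyp 𝒜 K) = ∑ K ∈ 𝒜 with L ≤ K, ofHyp ℬ K :=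
        Finset.sum_congr rfl fun K hK => by rw [ofHyp_of_mem (Finset.mem_filter.mp hK).1, arrPi_of]
    _ = ∑ K ∈ ℬ with L ≤ K, ofHyp ℬ K := by
        refine (Finset.sum_subset (Finset.filter_subset_filter _ hsub) fun K hK hKB => ?_).symm
        exact ofHyp_of_notMem fun hK' =>
          hKB (Finset.mem_filter.mpr ⟨hK', (Finset.mem_filter.mp hK).2⟩)

theorem arrSigma_sigmaL (hsub : ℬ ⊆ 𝒜) {L : HypSp ℓ} (hsat : ∀ K ∈ 𝒜, L ≤ K → K ∈ ℬ) :
    arrSigma ℬ 𝒜 hsub (sigmaL ℬ L) = sigmaL 𝒜 L := by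
  have hfilter : {K ∈ 𝒜 | L ≤ K} = {K ∈ ℬ | L ≤ K} := by
    ext K
    simp only [Finset.mem_filter]
    exact ⟨fun h => ⟨hsat K h.1 h.2, h.2⟩, fun h => ⟨hsub h.1, h.2⟩⟩
  rw [sigmaL_eq_sum_ofHyp, sigmaL_eq_sum_ofHyp, map_sum, hfilter]
  refine Finset.sum_congr rfl fun K hK => ?_
  have hKB := (Finset.mem_filter.mp hK).1
  rw [ofHyp_of_mem hKB, ofHyp_of_mem (hsub hKB), arrSigma_of]

end FreeLie

section Holonomy

variable {ℓ : ℕ} {ℬ 𝒜 : Finset (HypSp ℓ)}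

theorem holIdeal_le_comap_arrPi (harr : IsArrangement 𝒜) (hsub : ℬ ⊆ 𝒜) :
    holIdeal 𝒜 ≤ (holIdeal ℬ).comap (arrPi ℬ 𝒜) := by
  rw [holIdeal, LieSubmodule.lieSpan_le]
  rintro _ ⟨L, hL, H, hLH, rfl⟩
  rw [SetLike.mem_coe, LieIdeal.mem_comap, LieHom.map_lie, arrPi_sigmaL hsub, arrPi_of]
  by_cases hHB : (H : HypSp ℓ) ∈ ℬ
  swap
  · rw [ofHyp_of_notMem hHB, zero_lie]
    exact zero_mem _
  by_cases hK : ∃ K ∈ ℬ, K ≠ H ∧ L ≤ K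
  · obtain ⟨K, hKB, hKH, hLK⟩ := hK
    have hL' : L = (H : HypSp ℓ) ⊓ K := hL.eq_inf harr H.2 (hsub hKB) hKH.symm hLH hLK
    rw [ofHyp_of_mem hHB]
    exact LieSubmodule.subset_lieSpan ⟨L, ⟨H, hHB, K, hKB, hKH.symm, hL'⟩, ⟨H, hHB⟩, hLH, rfl⟩
  · push Not at hK
    have huniq : ∀ K ∈ ℬ, L ≤ K → K = H := fun K hKB hLK => by_contra fun h => hK K hKB h hLK
    rw [sigmaL_eq_ofHyp_of_unique hHB hLH huniq, lie_self]
    exact zero_mem _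

theorem holIdeal_le_comap_arrSigma (harr : IsArrangement 𝒜) (hclosed : IsClosedSub ℬ 𝒜)
    (hsub : ℬ ⊆ 𝒜) : holIdeal ℬ ≤ (holIdeal 𝒜).comap (arrSigma ℬ 𝒜 hsub) := by
  rw [holIdeal, LieSubmodule.lieSpan_le]
  rintro _ ⟨L, ⟨α, hα, β, hβ, hne, rfl⟩, H, hLH, rfl⟩
  rw [SetLike.mem_coe, LieIdeal.mem_comap, LieHom.map_lie, arrSigma_of,
    arrSigma_sigmaL hsub fun K hK hLK => hclosed.mem_of_inf_le harr hα hβ hne hK hLK]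
  exact LieSubmodule.subset_lieSpan ⟨_, ⟨α, hsub hα, β, hsub hβ, hne, rfl⟩, _, hLH, rfl⟩

def holPi (harr : IsArrangement 𝒜) (hsub : ℬ ⊆ 𝒜) : Holonomy 𝒜 →ₗ⁅ℚ⁆ Holonomy ℬ :=
  LieIdeal.quotientMap (arrPi ℬ 𝒜) _ _ (holIdeal_le_comap_arrPi harr hsub)

def holSigma (harr : IsArrangement 𝒜) (hclosed : IsClosedSub ℬ 𝒜) (hsub : ℬ ⊆ 𝒜) :
    Holonomy ℬ →ₗ⁅ℚ⁆ Holonomy 𝒜 :=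
  LieIdeal.quotientMap (arrSigma ℬ 𝒜 hsub) _ _ (holIdeal_le_comap_arrSigma harr hclosed hsub)

theorem holPi_mk' (harr : IsArrangement 𝒜) (hsub : ℬ ⊆ 𝒜) (x : FreeLie 𝒜) :
    holPi harr hsub (LieSubmodule.Quotient.mk' (holIdeal 𝒜) x) =
      LieSubmodule.Quotient.mk' (holIdeal ℬ) (arrPi ℬ 𝒜 x) :=
  rfl

theorem holSigma_mk' (harr : IsArrangement 𝒜) (hclosed : IsClosedSub ℬ 𝒜) (hsub : ℬ ⊆ 𝒜)
    (y : FreeLie ℬ) :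
    holSigma harr hclosed hsub (LieSubmodule.Quotient.mk' (holIdeal ℬ) y) =
      LieSubmodule.Quotient.mk' (holIdeal 𝒜) (arrSigma ℬ 𝒜 hsub y) :=
  rfl

theorem holPi_comp_holSigma (harr : IsArrangement 𝒜) (hclosed : IsClosedSub ℬ 𝒜)
    (hsub : ℬ ⊆ 𝒜) : (holPi harr hsub).comp (holSigma harr hclosed hsub) = LieHom.id :=
  quotient_hom_ext fun H => by
    rw [LieHom.comp_apply, holSigma_mk', holPi_mk', ← LieHom.comp_apply, arrPi_comp_arrSigma]
    rfl

variable (ℬ 𝒜) in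
def outerClasses : Set (Holonomy 𝒜) :=
  {z | ∃ H : {H : HypSp ℓ // H ∈ 𝒜}, (H : HypSp ℓ) ∉ ℬ ∧
    z = LieSubmodule.Quotient.mk' (holIdeal 𝒜) (of ℚ H)}

variable (ℬ 𝒜) in
def outerIdeal : LieIdeal ℚ (Holonomy 𝒜) :=
  LieSubmodule.lieSpan ℚ _ (outerClasses ℬ 𝒜)

theorem lie_outer_inner_mem_span (harr : IsArrangement 𝒜) (hclosed : IsClosedSub ℬ 𝒜)
    {c H : {H : HypSp ℓ // H ∈ 𝒜}} (hc : (c : HypSp ℓ) ∉ ℬ) (hH : (H : HypSp ℓ) ∈ ℬ) :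
    ⁅LieSubmodule.Quotient.mk' (holIdeal 𝒜) (of ℚ c),
        LieSubmodule.Quotient.mk' (holIdeal 𝒜) (of ℚ H)⁆ ∈
      Submodule.span ℚ (Set.image2 (⁅·, ·⁆) (outerClasses ℬ 𝒜) (outerClasses ℬ 𝒜)) := by
  classical
  set mk := LieIdeal.mkLieHom (holIdeal 𝒜)
  set L := (H : HypSp ℓ) ⊓ c
  have hrel : mk ⁅of ℚ c, sigmaL 𝒜 L⁆ = 0 :=
    (LieSubmodule.Quotient.mk_eq_zero _).mpr <| LieSubmodule.subset_lieSpan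
      ⟨L, ⟨H, H.2, c, c.2, ne_of_mem_of_not_mem hH hc, rfl⟩, c, inf_le_right, rfl⟩
  have hHL : (H : HypSp ℓ) ∈ {K ∈ 𝒜 | L ≤ K} := Finset.mem_filter.mpr ⟨H.2, inf_le_left⟩
  rw [sigmaL_eq_sum_ofHyp, ← Finset.add_sum_erase _ _ hHL, ofHyp_of_mem H.2, lie_add, lie_sum,
    map_add, map_sum] at hrel
  change mk ⁅of ℚ c, of ℚ H⁆ ∈ _
  rw [eq_neg_of_add_eq_zero_left hrel]
  refine neg_mem (Submodule.sum_mem _ fun K hK => ?_)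
  obtain ⟨hKH, hK⟩ := Finset.mem_erase.mp hK
  obtain ⟨hK𝒜, hLK⟩ := Finset.mem_filter.mp hK
  have hKB := hclosed.notMem_of_inf_le harr hH c.2 hc hKH hLK
  rw [ofHyp_of_mem hK𝒜, LieHom.map_lie]
  exact Submodule.subset_span (Set.mem_image2_of_mem ⟨c, hc, rfl⟩ ⟨⟨K, hK𝒜⟩, hKB, rfl⟩)

theorem coe_outerIdeal (harr : IsArrangement 𝒜) (hclosed : IsClosedSub ℬ 𝒜) :
    (outerIdeal ℬ 𝒜 : Set (Holonomy 𝒜)) = LieSubalgebra.lieSpan ℚ _ (outerClasses ℬ 𝒜) := by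
  refine LieSubalgebra.coe_lieIdeal_lieSpan_eq_lieSpan (lieSpan_range_mk'_of _) ?_
  rintro _ ⟨H, rfl⟩ _ ⟨c, hc, rfl⟩
  by_cases hH : (H : HypSp ℓ) ∈ ℬ
  · refine Submodule.span_le.mpr ?_ (lie_outer_inner_mem_span harr hclosed hc hH)
    exact Set.image2_subset_iff.mpr fun a ha b hb =>
      LieSubalgebra.lie_mem _ (LieSubalgebra.subset_lieSpan ha) (LieSubalgebra.subset_lieSpan hb)
  · exact LieSubalgebra.lie_mem _ (LieSubalgebra.subset_lieSpan ⟨c, hc, rfl⟩)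
      (LieSubalgebra.subset_lieSpan ⟨H, hH, rfl⟩)

theorem sub_holSigma_holPi_mem_outerIdeal (harr : IsArrangement 𝒜) (hclosed : IsClosedSub ℬ 𝒜)
    (hsub : ℬ ⊆ 𝒜) (x : Holonomy 𝒜) :
    x - holSigma harr hclosed hsub (holPi harr hsub x) ∈ outerIdeal ℬ 𝒜 := by
  set mk := LieIdeal.mkLieHom (outerIdeal ℬ 𝒜)
  have h : mk.comp ((holSigma harr hclosed hsub).comp (holPi harr hsub)) = mk :=
    quotient_hom_ext fun H => by
      by_cases hH : (H : HypSp ℓ) ∈ ℬ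
      · simp only [LieHom.comp_apply, holPi_mk', arrPi_of, ofHyp_of_mem hH, holSigma_mk',
          arrSigma_of]
      · simp only [LieHom.comp_apply, holPi_mk', arrPi_of, ofHyp_of_notMem hH, map_zero]
        exact ((LieSubmodule.Quotient.mk_eq_zero (outerIdeal ℬ 𝒜)).mpr
          (LieSubmodule.subset_lieSpan ⟨H, hH, rfl⟩)).symm
  rw [← LieSubmodule.Quotient.mk_eq_zero]
  change mk _ = 0
  rw [map_sub, sub_eq_zero, ← LieHom.congr_fun h x, LieHom.comp_apply, LieHom.comp_apply]

theorem ker_holPi (harr : IsArrangement 𝒜) (hclosed : IsClosedSub ℬ 𝒜) (hsub : ℬ ⊆ 𝒜) :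
    (holPi harr hsub).ker = outerIdeal ℬ 𝒜 := by
  refine le_antisymm (fun x hx => ?_) (LieSubmodule.lieSpan_le.mpr ?_)
  · simpa [LieHom.mem_ker.mp hx] using sub_holSigma_holPi_mem_outerIdeal harr hclosed hsub x
  · rintro _ ⟨H, hH, rfl⟩
    rw [SetLike.mem_coe, LieHom.mem_ker, holPi_mk', arrPi_of, ofHyp_of_notMem hH, map_zero]

theorem lie_holSigma_mem_lie_outerIdeal (harr : IsArrangement 𝒜) (hclosed : IsClosedSub ℬ 𝒜)
    (hsub : ℬ ⊆ 𝒜) {x : Holonomy 𝒜} (hx : x ∈ outerIdeal ℬ 𝒜) (q : Holonomy ℬ) :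
    ⁅x, holSigma harr hclosed hsub q⁆ ∈ ⁅outerIdeal ℬ 𝒜, outerIdeal ℬ 𝒜⁆ := by
  have hx' : x ∈ LieSubalgebra.lieSpan ℚ _ (outerClasses ℬ 𝒜) := by
    rw [← SetLike.mem_coe, ← coe_outerIdeal harr hclosed]
    exact hx
  refine LieIdeal.lie_mem_of_mem_lieSpan _ ?_ hx' (apply_mem_lieSpan_range _ q)
  rintro _ ⟨c, hc, rfl⟩ _ ⟨H, rfl⟩
  dsimp only
  rw [holSigma_mk', arrSigma_of]
  refine Submodule.span_le.mpr ?_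
    (lie_outer_inner_mem_span harr hclosed (H := ⟨H, hsub H.2⟩) hc H.2)
  rintro _ ⟨a, ha, b, hb, rfl⟩
  exact LieSubmodule.lie_mem_lie (LieSubmodule.subset_lieSpan ha) (LieSubmodule.subset_lieSpan hb)

end Holonomy

theorem closed_holonomy_almost_direct_product {ℓ : ℕ} (ℬ 𝒜 : Finset (HypSp ℓ))
    (harr : IsArrangement 𝒜) (hclosed : IsClosedSub ℬ 𝒜) (hsub : ℬ ⊆ 𝒜) :
    ∃ (pStar : Holonomy 𝒜 →ₗ⁅ℚ⁆ Holonomy ℬ) (sStar : Holonomy ℬ →ₗ⁅ℚ⁆ Holonomy 𝒜),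
      -- π₊ and σ₊ are induced by π and σ on the holonomy quotients
      (∀ x : FreeLie 𝒜, pStar (LieSubmodule.Quotient.mk' (holIdeal 𝒜) x)
          = LieSubmodule.Quotient.mk' (holIdeal ℬ) (arrPi ℬ 𝒜 x)) ∧
      (∀ y : FreeLie ℬ, sStar (LieSubmodule.Quotient.mk' (holIdeal ℬ) y)
          = LieSubmodule.Quotient.mk' (holIdeal 𝒜) (arrSigma ℬ 𝒜 hsub y)) ∧
      -- π₊ is surjective and split by σ₊
      Function.Surjective pStar ∧
      pStar.comp sStar = LieHom.id ∧
      -- the kernel of π₊ is the Lie subalgebra generated by the classes of 𝒜∖ℬ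
      ((pStar.ker : Set (Holonomy 𝒜)) =
        (LieSubalgebra.lieSpan ℚ (Holonomy 𝒜)
          {z | ∃ H : {H : HypSp ℓ // H ∈ 𝒜}, (H : HypSp ℓ) ∉ ℬ ∧
            z = LieSubmodule.Quotient.mk' (holIdeal 𝒜) (FreeLieAlgebra.of ℚ H)} :
              Set (Holonomy 𝒜))) ∧
      -- almost-direct product condition: [Ker π₊, σ₊(𝔥(ℬ))] ⊆ [Ker π₊, Ker π₊]
      (∀ x ∈ pStar.ker, ∀ q : Holonomy ℬ,
        ⁅x, sStar q⁆ ∈ Submodule.span ℚ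
          {z : Holonomy 𝒜 | ∃ a ∈ pStar.ker, ∃ b ∈ pStar.ker, z = ⁅a, b⁆}) := by
  have hsplit := holPi_comp_holSigma harr hclosed hsub
  refine ⟨holPi harr hsub, holSigma harr hclosed hsub, holPi_mk' harr hsub,
    holSigma_mk' harr hclosed hsub, fun q => ⟨_, LieHom.congr_fun hsplit q⟩, hsplit, ?_, ?_⟩
  · rw [ker_holPi harr hclosed hsub]
    exact coe_outerIdeal harr hclosed
  · intro x hx q
    rw [ker_holPi harr hclosed hsub] at hx ⊢
    have h := lie_holSigma_mem_lie_outerIdeal harr hclosed hsub hx q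
    rw [← LieSubmodule.mem_toSubmodule, LieSubmodule.lieIdeal_oper_eq_linear_span'] at h
    simpa only [eq_comm] using h
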